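/- arXiv:2011.07195 — 3 statements merged into one kernel-verified Lean document; each statement's English description precedes it below -/
import Mathlib

section
/- As M tends to infinity, the probability that the photon reaches detector D₀ in the blocked tandem interferometer, namely (cos(π/(2M)))^(2M), tends to 1; i.e., lim_{M→∞} (cos(π/(2M)))^(2M) = 1. -/
open Real Filter

/-! Since `1 - x²/2 ≤ cos x ≤ 1`, Bernoulli's inequality squeezes `cos x ^ n` between
`1 - n x²/2` and `1`. For `x = π/(2M)` and `n = 2M` the defect `n x²/2 = π²/(4M)` vanishes
as `M → ∞`. -/

theorem Real.one_sub_mul_sq_div_two_le_cos_pow {x : ℝ} (hx : x ^ 2 ≤ 2) (n : ℕ) :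
    1 - n * (x ^ 2 / 2) ≤ cos x ^ n :=
  calc 1 - n * (x ^ 2 / 2) = 1 + n * (-(x ^ 2 / 2)) := by ring
    _ ≤ (1 + -(x ^ 2 / 2)) ^ n := one_add_mul_le_pow (by linarith) n
    _ ≤ cos x ^ n := by
      gcongr
      · linarith
      · linarith [one_sub_sq_div_two_le_cos (x := x)]

theorem Real.cos_pow_le_one {x : ℝ} (hx : x ^ 2 ≤ 2) (n : ℕ) : cos x ^ n ≤ 1 :=
  pow_le_one₀ (by nlinarith [one_sub_sq_div_two_le_cos (x := x)]) (cos_le_one x)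

theorem Real.tendsto_cos_pow_of_tendsto_mul_sq {α : Type*} {l : Filter α} {x : α → ℝ}
    {n : α → ℕ} (hx : Tendsto x l (nhds 0))
    (hnx : Tendsto (fun k => (n k : ℝ) * x k ^ 2) l (nhds 0)) :
    Tendsto (fun k => cos (x k) ^ n k) l (nhds 1) := by
  have hsmall : ∀ᶠ k in l, x k ^ 2 ≤ 2 := by
    have hsq : Tendsto (fun k => x k ^ 2) l (nhds 0) := by simpa using hx.pow 2
    exact hsq.eventually (ge_mem_nhds (by norm_num))
  have hlower : Tendsto (fun k => 1 - n k * (x k ^ 2 / 2)) l (nhds 1) := by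
    simpa [mul_div_assoc'] using (hnx.div_const 2).const_sub 1
  refine tendsto_of_tendsto_of_tendsto_of_le_of_le' hlower tendsto_const_nhds ?_ ?_
  · filter_upwards [hsmall] with k hk using one_sub_mul_sq_div_two_le_cos_pow hk (n k)
  · filter_upwards [hsmall] with k hk using cos_pow_le_one hk (n k)

/-- As `M → ∞`, the blocked-case detection probability
`(cos (π/(2M)))^(2M)` tends to `1`. -/
theorem blocked_detection_prob_tendsto_one :
    Tendsto (fun M : ℕ => (Real.cos (π / (2 * M))) ^ (2 * M)) atTop (nhds 1) := by
  have hangle : Tendsto (fun M : ℕ => π / (2 * M)) atTop (nhds 0) := by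
    simpa [div_mul_eq_div_div] using tendsto_const_div_atTop_nhds_zero_nat (π / 2)
  have hdefect : Tendsto (fun M : ℕ => ((2 * M : ℕ) : ℝ) * (π / (2 * M)) ^ 2) atTop (nhds 0) := by
    refine (tendsto_const_div_atTop_nhds_zero_nat (π ^ 2 / 2)).congr' ?_
    filter_upwards [eventually_ne_atTop 0] with M hM
    field_simp
    push_cast
    ring
  exact tendsto_cos_pow_of_tendsto_mul_sq hangle hdefect
end

section
/- For every natural number M ≥ 1, the blocked-case detection probability satisfies (cos(π/(2M)))^(2M) ≥ 1 − π²/(4M). -/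
open Real

/-! Since `cos² x = 1 - sin² x ≥ 1 - x²`, Bernoulli's inequality gives
`cos x ^ (2n) = (cos² x) ^ n ≥ 1 - n x²`; take `x = π / (2M)` and `n = M`. -/

theorem one_sub_mul_sq_le_cos_pow_two_mul (x : ℝ) (n : ℕ) :
    1 - n * x ^ 2 ≤ cos x ^ (2 * n) :=
  calc 1 - n * x ^ 2 ≤ 1 + n * (cos x ^ 2 - 1) := by
        rw [cos_sq', sub_sub_cancel_left]
        nlinarith [sin_sq_le_sq (x := x), n.cast_nonneg (α := ℝ)]
    _ ≤ (cos x ^ 2) ^ n := one_add_mul_sub_le_pow (by linarith [sq_nonneg (cos x)]) n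
    _ = cos x ^ (2 * n) := (pow_mul _ _ _).symm

theorem blocked_detection_prob_lower_bound_general (M : ℕ) :
    (Real.cos (π / (2 * M))) ^ (2 * M) ≥ 1 - π ^ 2 / (4 * M) := by
  have hπ : π ^ 2 / (4 * M) = M * (π / (2 * M)) ^ 2 := by
    rcases eq_or_ne (M : ℝ) 0 with hM | hM
    · simp [hM] -- both sides are `0`, by the convention `x / 0 = 0`
    · field_simp
      ring
  rw [ge_iff_le, hπ]
  exact one_sub_mul_sq_le_cos_pow_two_mul _ _

/-- For every `M ≥ 1`, the blocked-case detection probability satisfies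
`(cos (π/(2M)))^(2M) ≥ 1 − π²/(4M)`. -/
theorem blocked_detection_prob_lower_bound (M : ℕ) (hM : 1 ≤ M) :
    (Real.cos (π / (2 * M))) ^ (2 * M) ≥ 1 - π ^ 2 / (4 * M) :=
  blocked_detection_prob_lower_bound_general M
end

section
/- Let |0_L⟩ = (|0000⟩ + |1111⟩)/√2 and |1_L⟩ = (|1001⟩ + |0110⟩)/√2 in (ℂ²)^{⊗4}. For every qubit position i ∈ {1,2,3,4} and every single-qubit Pauli operator P ∈ {X, Y, Z} acting on qubit i (and as the identity on the other qubits), one has ⟨0_L| P |1_L⟩ = 0 and ⟨0_L| P |0_L⟩ = ⟨1_L| P |1_L⟩. These are the error-correction conditions guaranteeing that the four-qubit code can correct the erasure of any single qubit. -/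
open Matrix

/-- The index type of `(ℂ²)^{⊗4}`. -/
abbrev Q4 : Type := Fin 2 × Fin 2 × Fin 2 × Fin 2

/-- The bits of a basis index of `(ℂ²)^{⊗4}`. -/
def bits (x : Q4) : Fin 4 → Fin 2 := ![x.1, x.2.1, x.2.2.1, x.2.2.2]

/-- The computational basis vector `|a₁a₂a₃a₄⟩` of `(ℂ²)^{⊗4}`. -/
def ket4 (a b c d : Fin 2) : Q4 → ℂ := fun x => if x = (a, b, c, d) then 1 else 0

/-- The Pauli matrix `X`. -/
def pauliX : Matrix (Fin 2) (Fin 2) ℂ := !![0, 1; 1, 0]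

/-- The Pauli matrix `Y`. -/
def pauliY : Matrix (Fin 2) (Fin 2) ℂ := !![0, -Complex.I; Complex.I, 0]

/-- The Pauli matrix `Z`. -/
def pauliZ : Matrix (Fin 2) (Fin 2) ℂ := !![1, 0; 0, -1]

/-- A single-qubit operator `P` acting on qubit `i` of `(ℂ²)^{⊗4}`
(and as the identity on the other qubits). -/
def pauliOn (P : Matrix (Fin 2) (Fin 2) ℂ) (i : Fin 4) : Matrix Q4 Q4 ℂ :=
  fun r c => ∏ k : Fin 4,
    if k = i then P (bits r k) (bits c k) else (if bits r k = bits c k then 1 else 0)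

/-- The standard Hermitian inner product on `(ℂ²)^{⊗4}`. -/
noncomputable def innerC (u v : Q4 → ℂ) : ℂ := ∑ x : Q4, (starRingEnd ℂ) (u x) * v x

/-- The logical codeword `|0_L⟩ = (|0000⟩ + |1111⟩)/√2`. -/
noncomputable def zeroL : Q4 → ℂ :=
  ((Real.sqrt 2 : ℂ))⁻¹ • (ket4 0 0 0 0 + ket4 1 1 1 1)

/-- The logical codeword `|1_L⟩ = (|1001⟩ + |0110⟩)/√2`. -/
noncomputable def oneL : Q4 → ℂ :=
  ((Real.sqrt 2 : ℂ))⁻¹ • (ket4 1 0 0 1 + ket4 0 1 1 0)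

/-!
The four basis strings carrying `|0_L⟩` and `|1_L⟩` pairwise differ in at least two positions,
while an operator on a single qubit only connects strings that agree off that qubit. Hence every
cross term in the matrix elements vanishes, and each diagonal element reduces to
`(P₀₀ + P₁₁) / 2 = tr P / 2`, because each codeword superposes a string with its complement.
-/

lemma pauliOn_apply_self (P : Matrix (Fin 2) (Fin 2) ℂ) (i : Fin 4) (r : Q4) :
    pauliOn P i r r = P (bits r i) (bits r i) := by
  simp [pauliOn]

lemma pauliOn_apply_eq_zero_of_two_le_hammingDist (P : Matrix (Fin 2) (Fin 2) ℂ) (i : Fin 4)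
    {r c : Q4} (h : 2 ≤ hammingDist (bits r) (bits c)) : pauliOn P i r c = 0 := by
  by_contra hne
  have hsub : (Finset.univ.filter fun k => bits r k ≠ bits c k) ⊆ {i} := by
    intro k hk
    by_contra hki
    exact hne (Finset.prod_eq_zero (Finset.mem_univ k) (by simp_all))
  exact absurd (h.trans (Finset.card_le_card hsub)) (by rw [Finset.card_singleton]; omega)

lemma Matrix.diag_add_diag_of_ne {R : Type*} [AddCommMonoid R] (P : Matrix (Fin 2) (Fin 2) R)
    {a b : Fin 2} (h : a ≠ b) : P a a + P b b = P.trace := by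
  fin_cases a <;> fin_cases b <;> simp_all [Matrix.trace, Fin.sum_univ_two, add_comm]

lemma innerC_eq_star_dotProduct (u v : Q4 → ℂ) : innerC u v = star u ⬝ᵥ v := rfl

noncomputable def pairState (x y : Q4) : Q4 → ℂ :=
  ((Real.sqrt 2 : ℂ))⁻¹ • (Pi.single x 1 + Pi.single y 1)

lemma ket4_eq_single (a b c d : Fin 2) : ket4 a b c d = Pi.single (a, b, c, d) 1 := by
  ext x
  simp [ket4, Pi.single_apply]

lemma zeroL_eq_pairState : zeroL = pairState (0, 0, 0, 0) (1, 1, 1, 1) := by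
  simp only [zeroL, pairState, ket4_eq_single]

lemma oneL_eq_pairState : oneL = pairState (1, 0, 0, 1) (0, 1, 1, 0) := by
  simp only [oneL, pairState, ket4_eq_single]

lemma innerC_pairState_mulVec_pairState (M : Matrix Q4 Q4 ℂ) (x y z w : Q4) :
    innerC (pairState x y) (M *ᵥ pairState z w) = (M x z + M x w + M y z + M y w) / 2 := by
  have hnorm : star ((Real.sqrt 2 : ℂ))⁻¹ * ((Real.sqrt 2 : ℂ))⁻¹ = 1 / 2 := by
    rw [star_inv₀, Complex.star_def, Complex.conj_ofReal, ← mul_inv, ← Complex.ofReal_mul,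
      Real.mul_self_sqrt zero_le_two]
    norm_num
  simp only [innerC_eq_star_dotProduct, pairState, star_smul, Matrix.mulVec_smul,
    Matrix.mulVec_add, Matrix.mulVec_single_one, smul_dotProduct, dotProduct_smul, star_add,
    Pi.star_single, star_one, add_dotProduct, dotProduct_add, single_dotProduct, smul_eq_mul,
    one_mul, Matrix.col_apply]
  linear_combination (M x z + M x w + M y z + M y w) * hnorm

/-- Error-correction conditions for single-qubit Pauli errors on the
four-qubit erasure code: for every qubit `i` and every `P ∈ {X, Y, Z}`,
`⟨0_L| P_i |1_L⟩ = 0` and `⟨0_L| P_i |0_L⟩ = ⟨1_L| P_i |1_L⟩`. -/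
theorem erasure_code_error_correction_conditions :
    ∀ i : Fin 4, ∀ P : Matrix (Fin 2) (Fin 2) ℂ,
      (P = pauliX ∨ P = pauliY ∨ P = pauliZ) →
      innerC zeroL (pauliOn P i *ᵥ oneL) = 0 ∧
      innerC zeroL (pauliOn P i *ᵥ zeroL) = innerC oneL (pauliOn P i *ᵥ oneL) := by
  intro i P _
  simp only [zeroL_eq_pairState, oneL_eq_pairState, innerC_pairState_mulVec_pairState,
    pauliOn_apply_self]
  simp (disch := decide) only [pauliOn_apply_eq_zero_of_two_le_hammingDist, add_zero]
  refine ⟨zero_div 2, ?_⟩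
  rw [Matrix.diag_add_diag_of_ne P (by revert i; decide),
    Matrix.diag_add_diag_of_ne P (by revert i; decide)]
end
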